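/- arXiv:2304.06407 — 5 statements merged into one kernel-verified Lean document; each statement's English description precedes it below -/
import Mathlib

section
/- In an edge-minimum valid experiment graph, every edge is contained in at least one perfect matching (i.e., the graph is matching covered). -/
open scoped Classical

noncomputable section

/-- An experiment graph: a finite simple graph with complex edge weights
(nonzero on edges) and, for each edge, a colour at each endpoint:
`col a b` is the colour of the edge `{a,b}` at the endpoint `a`. -/
structure ExpGraph (V : Type) [Fintype V] [DecidableEq V] (μ : ℕ) where
  G : SimpleGraph V
  w : Sym2 V → ℂ
  w_ne : ∀ e ∈ G.edgeSet, w e ≠ 0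
  col : V → V → Fin μ

namespace ExpGraph

variable {V : Type} [Fintype V] [DecidableEq V] {μ : ℕ}

/-- `m` encodes a perfect matching: a fixed-point-free involution matching
each vertex to an adjacent vertex. -/
def IsPM (E : ExpGraph V μ) (m : V → V) : Prop :=
  ∀ x, E.G.Adj x (m x) ∧ m (m x) = x

/-- The product of the weights of the edges of the perfect matching `m`. -/
def matchWeight (E : ExpGraph V μ) (m : V → V) : ℂ :=
  (Finset.univ.image fun x => s(x, m x)).prod E.w

/-- The perfect matching `m` induces the vertex colouring `vc`. -/
def Induces (E : ExpGraph V μ) (m : V → V) (vc : V → Fin μ) : Prop :=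
  ∀ x, E.col x (m x) = vc x

/-- The weight of a vertex colouring: the sum, over all perfect matchings
inducing it, of the product of the weights of the matching edges. -/
def weight (E : ExpGraph V μ) (vc : V → Fin μ) : ℂ :=
  ∑ m ∈ Finset.univ.filter (fun m : V → V => E.IsPM m ∧ E.Induces m vc),
    E.matchWeight m

/-- A valid experiment graph: each monochromatic vertex colouring has
weight 1 and all other vertex colourings have weight 0. -/
def Valid (E : ExpGraph V μ) : Prop :=
  (∀ i : Fin μ, E.weight (fun _ => i) = 1) ∧
  (∀ vc : V → Fin μ, (∀ i : Fin μ, vc ≠ fun _ => i) → E.weight vc = 0)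

/-- Number of edges. -/
def edgeCount (E : ExpGraph V μ) : ℕ := E.G.edgeSet.ncard

/-- The colour degree `d(x,i)`: number of edges incident on `x` whose colour at `x` is `i`. -/
def colDeg (E : ExpGraph V μ) (x : V) (i : Fin μ) : ℕ :=
  (Finset.univ.filter fun y => E.G.Adj x y ∧ E.col x y = i).card

/-- Edge-minimum valid experiment graph: valid, and no valid experiment graph
with the same number of vertices and the same dimension has fewer edges. -/
def EdgeMin (E : ExpGraph V μ) : Prop :=
  E.Valid ∧ ∀ (V' : Type) [Fintype V'] [DecidableEq V'] (E' : ExpGraph V' μ),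
    E'.Valid → Fintype.card V' = Fintype.card V → E.edgeCount ≤ E'.edgeCount

/-- The edge `{x,y}` is colour isolated of colour `i`: it is monochromatic of colour `i`
and `d(x,i) = d(y,i) = 1`. -/
def ColIso (E : ExpGraph V μ) (x y : V) (i : Fin μ) : Prop :=
  E.G.Adj x y ∧ E.col x y = i ∧ E.col y x = i ∧ E.colDeg x i = 1 ∧ E.colDeg y i = 1

end ExpGraph

/-- an edge-minimum valid experiment graph is matching covered:
every edge is contained in at least one perfect matching. -/
theorem edge_minimum_is_matching_covered
    {V : Type} [Fintype V] [DecidableEq V] {μ : ℕ}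
    (E : ExpGraph V μ) (hmin : E.EdgeMin) :
    ∀ e ∈ E.G.edgeSet, ∃ m, E.IsPM m ∧ ∃ x : V, e = s(x, m x) := by
  intro e he
  by_contra hcon
  push_neg at hcon
  -- every PM avoids e
  have havoid : ∀ m : V → V, E.IsPM m → ∀ x : V, s(x, m x) ≠ e := by
    intro m hm x hx
    exact hcon m hm x hx.symm
  -- the graph with e deleted
  set E' : ExpGraph V μ :=
    { G := E.G.deleteEdges {e}
      w := E.w
      w_ne := by
        intro f hf
        rw [SimpleGraph.edgeSet_deleteEdges] at hf
        exact E.w_ne f hf.1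
      col := E.col } with hE'
  have hPM : ∀ m : V → V, E'.IsPM m ↔ E.IsPM m := by
    intro m
    constructor
    · intro h x
      exact ⟨(SimpleGraph.deleteEdges_adj.1 (h x).1).1, (h x).2⟩
    · intro h x
      refine ⟨SimpleGraph.deleteEdges_adj.2 ⟨(h x).1, ?_⟩, (h x).2⟩
      simp only [Set.mem_singleton_iff]
      exact havoid m h x
  have hweight : ∀ vc : V → Fin μ, E'.weight vc = E.weight vc := by
    intro vc
    unfold ExpGraph.weight
    apply Finset.sum_congr
    · apply Finset.filter_congr
      intro m _
      simp only [hPM m]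
      rfl
    · intro m _
      rfl
  have hvalid : E'.Valid := by
    obtain ⟨h1, h2⟩ := hmin.1
    exact ⟨fun i => (hweight _).trans (h1 i), fun vc hvc => (hweight _).trans (h2 vc hvc)⟩
  have hle := hmin.2 V E' hvalid rfl
  have hlt : E'.edgeCount < E.edgeCount := by
    unfold ExpGraph.edgeCount
    have : E'.G.edgeSet = E.G.edgeSet \ {e} := SimpleGraph.edgeSet_deleteEdges _
    rw [this]
    exact Set.ncard_diff_singleton_lt_of_mem he (Set.toFinite _)
  omega
end
end

section
/- In a valid experiment graph G with dimension μ, for every vertex v and every colour i in [μ], there exists a monochromatic edge e of colour i incident on v. -/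
open scoped Classical

noncomputable section

/-- in a valid experiment graph, every vertex has, for every colour `i`,
an incident monochromatic edge of colour `i`. -/
theorem exists_monochromatic_edge
    {V : Type} [Fintype V] [DecidableEq V] {μ : ℕ}
    (E : ExpGraph V μ) (hV : E.Valid) :
    ∀ (v : V) (i : Fin μ), ∃ u : V, E.G.Adj v u ∧ E.col v u = i ∧ E.col u v = i := by
  intro v i
  have h1 : E.weight (fun _ => i) = 1 := hV.1 i
  have hne : (Finset.univ.filter
      (fun m : V → V => E.IsPM m ∧ E.Induces m (fun _ => i))).Nonempty := by
    by_contra h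
    rw [Finset.not_nonempty_iff_eq_empty] at h
    rw [ExpGraph.weight, h, Finset.sum_empty] at h1
    exact one_ne_zero h1.symm
  obtain ⟨m, hm⟩ := hne
  rw [Finset.mem_filter] at hm
  obtain ⟨-, hpm, hind⟩ := hm
  refine ⟨m v, (hpm v).1, hind v, ?_⟩
  have := hind (m v)
  rwa [(hpm v).2] at this
end
end

section
/- Let G be an edge-minimum valid experiment graph. If e is an edge incident on a vertex u with colour degree d(u, c(e)) = 1 (i.e., e is the unique edge incident on u whose colour at u is c(e)), then e is colour isolated, meaning e is monochromatic of colour c(e) and also d(v, c(e)) = 1 where v is the other endpoint of e. -/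
open scoped Classical

noncomputable section

/-!
If `uv` is the only edge of colour `c` at `u`, every perfect matching inducing the all-`c`
colouring matches `u` with `v`, so `uv` is monochromatic. Deleting every other edge of colour `c`
at `v` keeps the graph valid: a perfect matching using such an edge colours `v` with `c` but, not
matching `u` with `v`, cannot colour `u` with `c`. So the colourings `vc` with
`vc v = c ≠ vc u`, none of them monochromatic, lose all their matchings and get weight `0`, while
every other colouring keeps all of its matchings. Edge minimality therefore forbids such edges.
-/

namespace ExpGraph

variable {V : Type} [Fintype V] [DecidableEq V] {μ : ℕ}

theorem colDeg_eq_one_iff (E : ExpGraph V μ) (x : V) (i : Fin μ) :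
    E.colDeg x i = 1 ↔ ∃! y, E.G.Adj x y ∧ E.col x y = i :=
  (Fintype.existsUnique_iff_card_one _).symm

theorem IsPM.apply_eq_of_apply_eq {E : ExpGraph V μ} {m : V → V} (hm : E.IsPM m) {x y : V}
    (h : m x = y) : m y = x :=
  h ▸ (hm x).2

theorem IsPM.apply_eq_of_mk_eq {E : ExpGraph V μ} {m : V → V} (hm : E.IsPM m) {x y z : V}
    (h : s(x, m x) = s(y, z)) : m y = z := by
  rcases Sym2.eq_iff.mp h with ⟨rfl, hxz⟩ | ⟨rfl, hxy⟩
  · exact hxz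
  · exact hm.apply_eq_of_apply_eq hxy

theorem weight_eq_zero_of_forall {E : ExpGraph V μ} {vc : V → Fin μ}
    (h : ∀ m, E.IsPM m → ¬ E.Induces m vc) : E.weight vc = 0 := by
  rw [weight, Finset.filter_eq_empty_iff.mpr fun m _ hm => h m hm.1 hm.2, Finset.sum_empty]

theorem Valid.exists_isPM_induces {E : ExpGraph V μ} (hE : E.Valid) (i : Fin μ) :
    ∃ m, E.IsPM m ∧ E.Induces m fun _ => i := by
  by_contra! h
  exact one_ne_zero ((hE.1 i).symm.trans (weight_eq_zero_of_forall h))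

theorem Valid.of_weight_eq_or_eq_zero {E E' : ExpGraph V μ} (hE : E.Valid)
    (h : ∀ vc, E'.weight vc = E.weight vc ∨ (E'.weight vc = 0 ∧ ∀ i, vc ≠ fun _ => i)) :
    E'.Valid := by
  refine ⟨fun i => ?_, fun vc hvc => ?_⟩
  · rcases h fun _ => i with h | ⟨-, hi⟩
    · exact h.trans (hE.1 i)
    · exact absurd rfl (hi i)
  · rcases h vc with h | ⟨h, -⟩
    · exact h.trans (hE.2 vc hvc)
    · exact h

def deleteEdges (E : ExpGraph V μ) (D : Set (Sym2 V)) : ExpGraph V μ where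
  G := E.G.deleteEdges D
  w := E.w
  w_ne e he := E.w_ne e (SimpleGraph.edgeSet_mono (E.G.deleteEdges_le D) he)
  col := E.col

theorem isPM_deleteEdges_iff (E : ExpGraph V μ) (D : Set (Sym2 V)) (m : V → V) :
    (E.deleteEdges D).IsPM m ↔ E.IsPM m ∧ ∀ x, s(x, m x) ∉ D := by
  simp only [IsPM, deleteEdges, SimpleGraph.deleteEdges_adj]
  exact ⟨fun h => ⟨fun x => ⟨(h x).1.1, (h x).2⟩, fun x => (h x).1.2⟩,
    fun h x => ⟨⟨(h.1 x).1, h.2 x⟩, (h.1 x).2⟩⟩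

theorem weight_deleteEdges_of_forall (E : ExpGraph V μ) (D : Set (Sym2 V)) {vc : V → Fin μ}
    (h : ∀ m, E.IsPM m → E.Induces m vc → ∀ x, s(x, m x) ∉ D) :
    (E.deleteEdges D).weight vc = E.weight vc := by
  refine Finset.sum_congr (Finset.filter_congr fun m _ => ?_) fun _ _ => rfl
  rw [isPM_deleteEdges_iff]
  exact ⟨fun ⟨⟨hm, _⟩, hvc⟩ => ⟨hm, hvc⟩, fun ⟨hm, hvc⟩ => ⟨⟨hm, h m hm hvc⟩, hvc⟩⟩

theorem edgeCount_deleteEdges_lt (E : ExpGraph V μ) {D : Set (Sym2 V)} {e : Sym2 V}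
    (heD : e ∈ D) (he : e ∈ E.G.edgeSet) : (E.deleteEdges D).edgeCount < E.edgeCount :=
  Set.ncard_lt_ncard ((SimpleGraph.edgeSet_deleteEdges D).symm ▸
    Set.sdiff_ssubset_left_iff.mpr ⟨e, he, heD⟩) (Set.toFinite _)

theorem EdgeMin.notMem_edgeSet_of_valid_deleteEdges {E : ExpGraph V μ} (hE : E.EdgeMin)
    {D : Set (Sym2 V)} (hD : (E.deleteEdges D).Valid) {e : Sym2 V} (heD : e ∈ D) :
    e ∉ E.G.edgeSet := fun he =>
  (hE.2 V _ hD rfl).not_gt (E.edgeCount_deleteEdges_lt heD he)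

theorem Valid.deleteEdges_other_colour_edges {E : ExpGraph V μ} (hE : E.Valid) {u v : V}
    {c : Fin μ} (hcuv : E.col u v = c) (huniq : ∀ z, E.G.Adj u z → E.col u z = c → z = v) :
    (E.deleteEdges {e | ∃ z, z ≠ u ∧ E.col v z = c ∧ e = s(v, z)}).Valid := by
  refine hE.of_weight_eq_or_eq_zero fun vc => ?_
  by_cases hvc : vc v = c ∧ vc u ≠ c
  · refine .inr ⟨weight_eq_zero_of_forall fun m hm hind => ?_, fun i hi => ?_⟩
    · obtain ⟨hm, hD⟩ := (isPM_deleteEdges_iff _ _ m).mp hm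
      have hmv : m v = u := by
        by_contra hne
        exact hD v ⟨m v, hne, (hind v).trans hvc.1, rfl⟩
      exact hvc.2 ((hind u).symm.trans (hm.apply_eq_of_apply_eq hmv ▸ hcuv))
    · subst hi
      exact hvc.2 hvc.1
  · refine .inl (weight_deleteEdges_of_forall _ _ fun m hm hind x ⟨z, hzu, hcz, hx⟩ => hzu ?_)
    have hmv : m v = z := hm.apply_eq_of_mk_eq hx
    have hvc_u : vc u = c := not_not.mp fun h => hvc ⟨(hind v).symm.trans (hmv ▸ hcz), h⟩
    exact hmv.symm.trans (hm.apply_eq_of_apply_eq (huniq _ (hm u).1 ((hind u).trans hvc_u)))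

end ExpGraph

/-- in an edge-minimum valid experiment graph, an edge `e = {u,v}`
with `d(u, c(e,u)) = 1` is colour isolated: it is monochromatic and both
endpoints have colour degree one with respect to its colour. -/
theorem unique_colour_edge_is_colour_isolated
    {V : Type} [Fintype V] [DecidableEq V] {μ : ℕ}
    (E : ExpGraph V μ) (hmin : E.EdgeMin) (u v : V) (huv : E.G.Adj u v)
    (hdu : E.colDeg u (E.col u v) = 1) :
    E.ColIso u v (E.col u v) := by
  set c := E.col u v
  have huniq : ∀ z, E.G.Adj u z → E.col u z = c → z = v := fun z hz hcz =>
    ((E.colDeg_eq_one_iff u c).mp hdu).unique ⟨hz, hcz⟩ ⟨huv, rfl⟩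
  obtain ⟨m, hm, hind⟩ := hmin.1.exists_isPM_induces c
  have hmu : m u = v := huniq _ (hm u).1 (hind u)
  have hcvu : E.col v u = c := hm.apply_eq_of_apply_eq hmu ▸ hind v
  refine ⟨huv, rfl, hcvu, hdu, (E.colDeg_eq_one_iff v c).mpr ⟨u, ⟨huv.symm, hcvu⟩, ?_⟩⟩
  rintro z ⟨hvz, hcz⟩
  by_contra hzu
  exact hmin.notMem_edgeSet_of_valid_deleteEdges
    (hmin.1.deleteEdges_other_colour_edges rfl huniq) ⟨z, hzu, hcz, rfl⟩ hvz
end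
end

section
/- Suppose a valid experiment graph G on n > 4 vertices has a set M of 1-coloured isolated edges forming a perfect matching on the vertex set R of vertices whose colour degree with respect to colour 1 equals one, with the remaining vertices U matched among themselves by colour-1 edges. Let {u,v} and {u',v'} be two distinct edges of M, and suppose the edges {u,u'}, {u,v'}, {v,v'} are present with respective monochromatic colours i, j, k, all distinct from 1 and with i ≠ j, and such that u can receive colour i only via edges into R and v can receive colour k only via edges into R. Then the ratio of the weight of the vertex colouring vc (assigning colour i to u and u', colour k to v and v', and colour 1 to all other vertices) to the weight of the all-1 monochromatic colouring vc' equals w({u,u'})·w({v,v'}) / (w({u,v})·w({u',v'})); since w(vc') = 1 and all edge weights are nonzero, w(vc) ≠ 0, contradicting validity. Hence at most two of the four edges {u,u'}, {u,v'}, {v,u'}, {v,v'} can be present with these properties. -/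
open scoped Classical

noncomputable section

/-- in a valid experiment graph on more than 4 vertices, with the
`c₁`-coloured isolated edges forming a perfect matching on the set `R` of vertices
of `c₁`-colour degree one (and the remaining vertices `U` matched among themselves
by colour-`c₁` edges in any matching inducing the all-`c₁` colouring), if
`{u,v}` and `{u',v'}` are distinct `c₁`-coloured isolated edges and the edges
`{u,u'}, {u,v'}, {v,v'}` are present with monochromatic colours `i, j, k`
distinct from `c₁`, `i ≠ j`, and `u` (resp. `v`) can receive colour `i`
(resp. `k`) only via edges into `R`, then we reach a contradiction.  Hence at
most two of the four edges `{u,u'}, {u,v'}, {v,u'}, {v,v'}` can be so present. -/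
theorem at_most_two_cross_edges
    {V : Type} [Fintype V] [DecidableEq V] {μ : ℕ}
    (E : ExpGraph V μ) (hV : E.Valid) (hcard : 4 < Fintype.card V)
    (c₁ : Fin μ)
    (hPM : ∀ x : V, E.colDeg x c₁ = 1 → ∃ y : V, E.ColIso x y c₁)
    (hU : ∀ m : V → V, E.IsPM m → E.Induces m (fun _ => c₁) →
      ∀ x : V, E.colDeg x c₁ ≠ 1 → E.colDeg (m x) c₁ ≠ 1)
    (u v u' v' : V)
    (huv : E.ColIso u v c₁) (huv' : E.ColIso u' v' c₁)
    (hdist : s(u, v) ≠ s(u', v'))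
    (i j k : Fin μ)
    (h1 : E.G.Adj u u' ∧ E.col u u' = i ∧ E.col u' u = i)
    (h2 : E.G.Adj u v' ∧ E.col u v' = j ∧ E.col v' u = j)
    (h3 : E.G.Adj v v' ∧ E.col v v' = k ∧ E.col v' v = k)
    (hi : i ≠ c₁) (hj : j ≠ c₁) (hk : k ≠ c₁) (hij : i ≠ j)
    (hu : ∀ z : V, E.G.Adj u z → E.col u z = i → E.colDeg z c₁ = 1)
    (hv : ∀ z : V, E.G.Adj v z → E.col v z = k → E.colDeg z c₁ = 1) :
    False := by
  classical
  obtain ⟨hadj_uv, hcol_uv, hcol_vu, hdeg_u, hdeg_v⟩ := huv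
  obtain ⟨hadj_uv', hcol_uv', hcol_vu', hdeg_u', hdeg_v'⟩ := huv'
  obtain ⟨hadj1, hcol1a, hcol1b⟩ := h1
  obtain ⟨hadj2, hcol2a, hcol2b⟩ := h2
  obtain ⟨hadj3, hcol3a, hcol3b⟩ := h3
  have hne_uv : u ≠ v := hadj_uv.ne
  have hne_u'v' : u' ≠ v' := hadj_uv'.ne
  have hne_uu' : u ≠ u' := hadj1.ne
  have hne_uv' : u ≠ v' := hadj2.ne
  have hne_vv' : v ≠ v' := hadj3.ne
  have hne_vu' : v ≠ u' := by
    intro h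
    apply hk
    rw [← hcol3a, h, hcol_uv']
  -- uniqueness of the colour-c₁ edge at a vertex of colour degree one
  have key : ∀ x y z : V, E.colDeg x c₁ = 1 → E.G.Adj x y → E.col x y = c₁ →
      E.G.Adj x z → E.col x z = c₁ → y = z := by
    intro x y z hdeg hay hcy haz hcz
    have hdeg' : (Finset.univ.filter fun w => E.G.Adj x w ∧ E.col x w = c₁).card ≤ 1 :=
      le_of_eq hdeg
    exact Finset.card_le_one.mp hdeg' y (by simp [hay, hcy]) z (by simp [haz, hcz])
  -- the colouring vc
  set vc : V → Fin μ := fun x =>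
    if x = u ∨ x = u' then i else if x = v ∨ x = v' then k else c₁ with hvc_def
  have hvc_u : vc u = i := by simp [hvc_def]
  have hvc_u' : vc u' = i := by simp [hvc_def]
  have hvc_v : vc v = k := by simp [hvc_def, Ne.symm hne_uv, hne_vu']
  have hvc_v' : vc v' = k := by
    simp [hvc_def, (Ne.symm hne_uv'), (Ne.symm hne_u'v')]
  have hvc_other : ∀ x : V, x ≠ u → x ≠ v → x ≠ u' → x ≠ v' → vc x = c₁ := by
    intro x h1 h2 h3 h4
    simp [hvc_def, h1, h2, h3, h4]
  -- a fifth vertex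
  obtain ⟨x₀, hx₀⟩ : ∃ x : V, x ∉ ({u, v, u', v'} : Finset V) := by
    by_contra h
    push_neg at h
    have hsub : (Finset.univ : Finset V) ⊆ ({u, v, u', v'} : Finset V) :=
      fun x _ => h x
    have hle : Fintype.card V ≤ ({u, v, u', v'} : Finset V).card := by
      simpa [Finset.card_univ] using Finset.card_le_card hsub
    have h4 : ({u, v, u', v'} : Finset V).card ≤ 4 := by
      apply le_trans (Finset.card_insert_le _ _)
      apply Nat.succ_le_succ
      apply le_trans (Finset.card_insert_le _ _)
      apply Nat.succ_le_succ
      apply le_trans (Finset.card_insert_le _ _)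
      simp
    omega
  simp only [Finset.mem_insert, Finset.mem_singleton, not_or] at hx₀
  obtain ⟨hx₀u, hx₀v, hx₀u', hx₀v'⟩ := hx₀
  -- vc is not monochromatic, hence has weight 0
  have hvc0 : E.weight vc = 0 := by
    apply hV.2
    intro r hr
    apply hi
    have h1 : vc u = r := by rw [hr]
    have h2 : vc x₀ = r := by rw [hr]
    rw [← hvc_u, h1, ← h2, hvc_other x₀ hx₀u hx₀v hx₀u' hx₀v']
  -- structure of matchings inducing vc
  have forceA : ∀ m : V → V, E.IsPM m → E.Induces m vc →
      m u = u' ∧ m v = v' ∧ m u' = u ∧ m v' = v := by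
    intro m hm hind
    have hmu : m u = u' := by
      have hadj : E.G.Adj u (m u) := (hm u).1
      have hcol : E.col u (m u) = i := by rw [hind u, hvc_u]
      have hdegmu : E.colDeg (m u) c₁ = 1 := hu (m u) hadj hcol
      have hne1 : m u ≠ u := fun h => E.G.irrefl (h ▸ hadj)
      have hne2 : m u ≠ v := by
        intro h
        exact hi (by rw [← hcol, h, hcol_uv])
      have hne3 : m u ≠ v' := by
        intro h
        exact hij (by rw [← hcol, h, hcol2a])
      by_contra hne4
      have hvcz : vc (m u) = c₁ := hvc_other (m u) hne1 hne2 hne4 hne3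
      have hmz : m (m u) = u := (hm u).2
      have hcolz : E.col (m u) u = c₁ := by
        have := hind (m u)
        rw [hmz] at this
        rw [this, hvcz]
      obtain ⟨y, hy_adj, hy_col, hy_col', hy_deg, hy_deg'⟩ := hPM (m u) hdegmu
      have hyu : y = u := key (m u) y u hdegmu hy_adj hy_col hadj.symm hcolz
      subst hyu
      exact hi (by rw [← hcol, ← hy_col'])
    have hmu' : m u' = u := by rw [← hmu, (hm u).2]
    have hmv : m v = v' := by
      have hadj : E.G.Adj v (m v) := (hm v).1
      have hcol : E.col v (m v) = k := by rw [hind v, hvc_v]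
      have hdegmv : E.colDeg (m v) c₁ = 1 := hv (m v) hadj hcol
      have hne1 : m v ≠ v := fun h => E.G.irrefl (h ▸ hadj)
      have hne2 : m v ≠ u := by
        intro h
        exact hk (by rw [← hcol, h, hcol_vu])
      have hne3 : m v ≠ u' := by
        intro h
        have hmm : m (m v) = v := (hm v).2
        rw [h, hmu'] at hmm
        exact hne_uv hmm
      by_contra hne4
      have hvcz : vc (m v) = c₁ := hvc_other (m v) hne2 hne1 hne3 hne4
      have hmz : m (m v) = v := (hm v).2
      have hcolz : E.col (m v) v = c₁ := by
        have := hind (m v)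
        rw [hmz] at this
        rw [this, hvcz]
      obtain ⟨y, hy_adj, hy_col, hy_col', hy_deg, hy_deg'⟩ := hPM (m v) hdegmv
      have hyv : y = v := key (m v) y v hdegmv hy_adj hy_col hadj.symm hcolz
      subst hyv
      exact hk (by rw [← hcol, ← hy_col'])
    exact ⟨hmu, hmv, hmu', by rw [← hmv, (hm v).2]⟩
  -- structure of matchings inducing the all-c₁ colouring
  have forceB : ∀ m : V → V, E.IsPM m → E.Induces m (fun _ => c₁) →
      m u = v ∧ m v = u ∧ m u' = v' ∧ m v' = u' := by
    intro m hm hind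
    have hmu : m u = v := key u (m u) v hdeg_u (hm u).1 (hind u) hadj_uv hcol_uv
    have hmu' : m u' = v' :=
      key u' (m u') v' hdeg_u' (hm u').1 (hind u') hadj_uv' hcol_uv'
    exact ⟨hmu, by rw [← hmu, (hm u).2], hmu', by rw [← hmu', (hm u').2]⟩
  -- the two swap maps
  set F : (V → V) → (V → V) := fun m x =>
    if x = u then v else if x = v then u else if x = u' then v' else if x = v' then u'
    else m x with hF_def
  set Fi : (V → V) → (V → V) := fun m x =>
    if x = u then u' else if x = u' then u else if x = v then v' else if x = v' then v
    else m x with hFi_def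
  have hFu : ∀ m : V → V, F m u = v := fun m => by simp [hF_def]
  have hFv : ∀ m : V → V, F m v = u := fun m => by simp [hF_def, Ne.symm hne_uv]
  have hFu' : ∀ m : V → V, F m u' = v' := fun m => by
    simp [hF_def, Ne.symm hne_uu', Ne.symm hne_vu']
  have hFv' : ∀ m : V → V, F m v' = u' := fun m => by
    simp [hF_def, Ne.symm hne_uv', Ne.symm hne_vv', Ne.symm hne_u'v']
  have hFo : ∀ (m : V → V) (x : V), x ≠ u → x ≠ v → x ≠ u' → x ≠ v' → F m x = m x := by
    intro m x h1 h2 h3 h4; simp [hF_def, h1, h2, h3, h4]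
  have hFiu : ∀ m : V → V, Fi m u = u' := fun m => by simp [hFi_def]
  have hFiu' : ∀ m : V → V, Fi m u' = u := fun m => by simp [hFi_def, Ne.symm hne_uu']
  have hFiv : ∀ m : V → V, Fi m v = v' := fun m => by
    simp [hFi_def, Ne.symm hne_uv, hne_vu']
  have hFiv' : ∀ m : V → V, Fi m v' = v := fun m => by
    simp [hFi_def, Ne.symm hne_uv', Ne.symm hne_u'v', Ne.symm hne_vv']
  have hFio : ∀ (m : V → V) (x : V), x ≠ u → x ≠ v → x ≠ u' → x ≠ v' → Fi m x = m x := by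
    intro m x h1 h2 h3 h4; simp [hFi_def, h1, h2, h3, h4]
  set A := Finset.univ.filter fun m : V → V => E.IsPM m ∧ E.Induces m vc with hA_def
  set B := Finset.univ.filter fun m : V → V => E.IsPM m ∧ E.Induces m (fun _ => c₁)
    with hB_def
  -- F maps A into B
  have hFAB : ∀ m ∈ A, F m ∈ B := by
    intro m hm
    rw [hA_def, Finset.mem_filter] at hm
    obtain ⟨-, hpm, hind⟩ := hm
    obtain ⟨hmu, hmv, hmu', hmv'⟩ := forceA m hpm hind
    have hmx : ∀ x : V, x ≠ u → x ≠ v → x ≠ u' → x ≠ v' →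
        m x ≠ u ∧ m x ≠ v ∧ m x ≠ u' ∧ m x ≠ v' := by
      intro x h1 h2 h3 h4
      refine ⟨?_, ?_, ?_, ?_⟩ <;> intro h
      · exact h3 (by rw [← (hpm x).2, h, hmu])
      · exact h4 (by rw [← (hpm x).2, h, hmv])
      · exact h1 (by rw [← (hpm x).2, h, hmu'])
      · exact h2 (by rw [← (hpm x).2, h, hmv'])
    rw [hB_def, Finset.mem_filter]
    refine ⟨Finset.mem_univ _, ?_, ?_⟩
    · intro x
      by_cases h1 : x = u
      · subst h1; rw [hFu, hFv]; exact ⟨hadj_uv, rfl⟩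
      by_cases h2 : x = v
      · subst h2; rw [hFv, hFu]; exact ⟨hadj_uv.symm, rfl⟩
      by_cases h3 : x = u'
      · subst h3; rw [hFu', hFv']; exact ⟨hadj_uv', rfl⟩
      by_cases h4 : x = v'
      · subst h4; rw [hFv', hFu']; exact ⟨hadj_uv'.symm, rfl⟩
      · rw [hFo m x h1 h2 h3 h4]
        obtain ⟨g1, g2, g3, g4⟩ := hmx x h1 h2 h3 h4
        rw [hFo m (m x) g1 g2 g3 g4]
        exact ⟨(hpm x).1, (hpm x).2⟩
    · intro x
      by_cases h1 : x = u
      · subst h1; rw [hFu]; exact hcol_uv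
      by_cases h2 : x = v
      · subst h2; rw [hFv]; exact hcol_vu
      by_cases h3 : x = u'
      · subst h3; rw [hFu']; exact hcol_uv'
      by_cases h4 : x = v'
      · subst h4; rw [hFv']; exact hcol_vu'
      · rw [hFo m x h1 h2 h3 h4, hind x, hvc_other x h1 h2 h3 h4]
  -- Fi maps B into A
  have hFiBA : ∀ m ∈ B, Fi m ∈ A := by
    intro m hm
    rw [hB_def, Finset.mem_filter] at hm
    obtain ⟨-, hpm, hind⟩ := hm
    obtain ⟨hmu, hmv, hmu', hmv'⟩ := forceB m hpm hind
    have hmx : ∀ x : V, x ≠ u → x ≠ v → x ≠ u' → x ≠ v' →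
        m x ≠ u ∧ m x ≠ v ∧ m x ≠ u' ∧ m x ≠ v' := by
      intro x h1 h2 h3 h4
      refine ⟨?_, ?_, ?_, ?_⟩ <;> intro h
      · exact h2 (by rw [← (hpm x).2, h, hmu])
      · exact h1 (by rw [← (hpm x).2, h, hmv])
      · exact h4 (by rw [← (hpm x).2, h, hmu'])
      · exact h3 (by rw [← (hpm x).2, h, hmv'])
    rw [hA_def, Finset.mem_filter]
    refine ⟨Finset.mem_univ _, ?_, ?_⟩
    · intro x
      by_cases h1 : x = u
      · subst h1; rw [hFiu, hFiu']; exact ⟨hadj1, rfl⟩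
      by_cases h2 : x = v
      · subst h2; rw [hFiv, hFiv']; exact ⟨hadj3, rfl⟩
      by_cases h3 : x = u'
      · subst h3; rw [hFiu', hFiu]; exact ⟨hadj1.symm, rfl⟩
      by_cases h4 : x = v'
      · subst h4; rw [hFiv', hFiv]; exact ⟨hadj3.symm, rfl⟩
      · rw [hFio m x h1 h2 h3 h4]
        obtain ⟨g1, g2, g3, g4⟩ := hmx x h1 h2 h3 h4
        rw [hFio m (m x) g1 g2 g3 g4]
        exact ⟨(hpm x).1, (hpm x).2⟩
    · intro x
      by_cases h1 : x = u
      · subst h1; rw [hFiu, hvc_u]; exact hcol1a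
      by_cases h2 : x = v
      · subst h2; rw [hFiv, hvc_v]; exact hcol3a
      by_cases h3 : x = u'
      · subst h3; rw [hFiu', hvc_u']; exact hcol1b
      by_cases h4 : x = v'
      · subst h4; rw [hFiv', hvc_v']; exact hcol3b
      · rw [hFio m x h1 h2 h3 h4, hind x, hvc_other x h1 h2 h3 h4]
  -- F and Fi are mutually inverse
  have hleft : ∀ m ∈ A, Fi (F m) = m := by
    intro m hm
    rw [hA_def, Finset.mem_filter] at hm
    obtain ⟨-, hpm, hind⟩ := hm
    obtain ⟨hmu, hmv, hmu', hmv'⟩ := forceA m hpm hind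
    funext x
    by_cases h1 : x = u
    · subst h1; rw [hFiu, hmu]
    by_cases h2 : x = v
    · subst h2; rw [hFiv, hmv]
    by_cases h3 : x = u'
    · subst h3; rw [hFiu', hmu']
    by_cases h4 : x = v'
    · subst h4; rw [hFiv', hmv']
    · rw [hFio (F m) x h1 h2 h3 h4, hFo m x h1 h2 h3 h4]
  have hright : ∀ m ∈ B, F (Fi m) = m := by
    intro m hm
    rw [hB_def, Finset.mem_filter] at hm
    obtain ⟨-, hpm, hind⟩ := hm
    obtain ⟨hmu, hmv, hmu', hmv'⟩ := forceB m hpm hind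
    funext x
    by_cases h1 : x = u
    · subst h1; rw [hFu, hmu]
    by_cases h2 : x = v
    · subst h2; rw [hFv, hmv]
    by_cases h3 : x = u'
    · subst h3; rw [hFu', hmu']
    by_cases h4 : x = v'
    · subst h4; rw [hFv', hmv']
    · rw [hFo (Fi m) x h1 h2 h3 h4, hFio m x h1 h2 h3 h4]
  -- an edge with an endpoint among {u,v,u',v'} is not among the other matching edges
  have hnot : ∀ (g : V → V) (a b : V),
      (a = u ∨ a = v ∨ a = u' ∨ a = v') → (b = u ∨ b = v ∨ b = u' ∨ b = v') →
      s(a, b) ∉ (Finset.univ \ ({u, v, u', v'} : Finset V)).image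
        (fun x => s(x, g x)) := by
    intro g a b ha hb hmem
    rw [Finset.mem_image] at hmem
    obtain ⟨x, hx, hxe⟩ := hmem
    rw [Finset.mem_sdiff] at hx
    have hx4 : ¬(x = u ∨ x = v ∨ x = u' ∨ x = v') := by
      intro h
      exact hx.2 (by simp [Finset.mem_insert, Finset.mem_singleton]; tauto)
    rw [Sym2.eq_iff] at hxe
    rcases hxe with ⟨h, -⟩ | ⟨h, -⟩
    · exact hx4 (h ▸ ha)
    · exact hx4 (h ▸ hb)
  -- generic computation of matchWeight for a matching pairing the four vertices
  have hmw : ∀ (g : V → V) (a b c d : V),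
      ({a, b, c, d} : Finset V) = ({u, v, u', v'} : Finset V) →
      g a = b → g b = a → g c = d → g d = c → s(a, b) ≠ s(c, d) →
      E.matchWeight g = E.w s(a, b) * E.w s(c, d) *
        ((Finset.univ \ ({u, v, u', v'} : Finset V)).image
          (fun x => s(x, g x))).prod E.w := by
    intro g a b c d hset hga hgb hgc hgd hne
    set S := (Finset.univ \ ({u, v, u', v'} : Finset V)).image (fun x => s(x, g x))
      with hS_def
    have hmem4 : ∀ y : V, y ∈ ({a, b, c, d} : Finset V) →
        y = u ∨ y = v ∨ y = u' ∨ y = v' := by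
      intro y hy
      rw [hset] at hy
      simpa [Finset.mem_insert, Finset.mem_singleton] using hy
    have haf : a = u ∨ a = v ∨ a = u' ∨ a = v' := hmem4 a (by simp)
    have hbf : b = u ∨ b = v ∨ b = u' ∨ b = v' := hmem4 b (by simp)
    have hcf : c = u ∨ c = v ∨ c = u' ∨ c = v' := hmem4 c (by simp)
    have hdf : d = u ∨ d = v ∨ d = u' ∨ d = v' := hmem4 d (by simp)
    have h4img : (({a, b, c, d} : Finset V)).image (fun x => s(x, g x)) =
        {s(a, b), s(c, d)} := by
      ext e
      simp only [Finset.mem_image, Finset.mem_insert, Finset.mem_singleton]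
      constructor
      · rintro ⟨x, hx, rfl⟩
        rcases hx with rfl | rfl | rfl | rfl
        · exact Or.inl (by rw [hga])
        · exact Or.inl (by rw [hgb, Sym2.eq_swap])
        · exact Or.inr (by rw [hgc])
        · exact Or.inr (by rw [hgd, Sym2.eq_swap])
      · rintro (rfl | rfl)
        · exact ⟨a, by simp, by rw [hga]⟩
        · exact ⟨c, by simp, by rw [hgc]⟩
    have hU : (Finset.univ : Finset V) =
        ({u, v, u', v'} : Finset V) ∪ (Finset.univ \ ({u, v, u', v'} : Finset V)) :=
      (Finset.union_sdiff_of_subset (Finset.subset_univ _)).symm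
    have himage : (Finset.univ.image fun x => s(x, g x)) =
        insert s(a, b) (insert s(c, d) S) := by
      have h4img' : (({u, v, u', v'} : Finset V)).image (fun x => s(x, g x)) =
          {s(a, b), s(c, d)} := by rw [← hset]; exact h4img
      conv_lhs => rw [hU]
      rw [Finset.image_union, h4img', Finset.insert_union]
      rfl
    have hnot2 : s(c, d) ∉ S := hnot g c d hcf hdf
    have hnot1 : s(a, b) ∉ insert s(c, d) S := by
      rw [Finset.mem_insert]
      rintro (h | h)
      · exact hne h
      · exact hnot g a b haf hbf h
    unfold ExpGraph.matchWeight
    rw [himage, Finset.prod_insert hnot1,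
      Finset.prod_insert hnot2, ← mul_assoc]
  -- the key sum identity
  have hset1 : ({u, u', v, v'} : Finset V) = ({u, v, u', v'} : Finset V) := by
    ext y
    simp only [Finset.mem_insert, Finset.mem_singleton]
    tauto
  have hne_uu'vv' : s(u, u') ≠ s(v, v') := by
    intro heq
    rw [Sym2.eq_iff] at heq
    rcases heq with ⟨h, -⟩ | ⟨h, -⟩
    · exact hne_uv h
    · exact hne_uv' h
  have main : ∑ m ∈ A, E.matchWeight m * (E.w s(u, v) * E.w s(u', v')) =
      ∑ m ∈ B, E.matchWeight m * (E.w s(u, u') * E.w s(v, v')) := by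
    refine Finset.sum_nbij' F Fi hFAB hFiBA hleft hright ?_
    intro m hm
    have hmA := hm
    rw [hA_def, Finset.mem_filter] at hmA
    obtain ⟨-, hpm, hind⟩ := hmA
    obtain ⟨hmu, hmv, hmu', hmv'⟩ := forceA m hpm hind
    have hw1 : E.matchWeight m = E.w s(u, u') * E.w s(v, v') *
        ((Finset.univ \ ({u, v, u', v'} : Finset V)).image
          (fun x => s(x, m x))).prod E.w :=
      hmw m u u' v v' hset1 hmu hmu' hmv hmv' hne_uu'vv'
    have hSeq : ((Finset.univ \ ({u, v, u', v'} : Finset V)).image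
          (fun x => s(x, F m x))) =
        ((Finset.univ \ ({u, v, u', v'} : Finset V)).image
          (fun x => s(x, m x))) := by
      apply Finset.image_congr
      intro x hx
      rw [Finset.mem_coe, Finset.mem_sdiff] at hx
      have hx4 : x ≠ u ∧ x ≠ v ∧ x ≠ u' ∧ x ≠ v' := by
        have := hx.2
        simp only [Finset.mem_insert, Finset.mem_singleton, not_or] at this
        exact this
      show s(x, F m x) = s(x, m x)
      rw [hFo m x hx4.1 hx4.2.1 hx4.2.2.1 hx4.2.2.2]
    have hw2 : E.matchWeight (F m) = E.w s(u, v) * E.w s(u', v') *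
        ((Finset.univ \ ({u, v, u', v'} : Finset V)).image
          (fun x => s(x, m x))).prod E.w := by
      rw [← hSeq]
      exact hmw (F m) u v u' v' rfl (hFu m) (hFv m) (hFu' m) (hFv' m) hdist
    rw [hw1, hw2]
    ring
  -- conclude
  have hfinal : E.weight vc * (E.w s(u, v) * E.w s(u', v')) =
      E.weight (fun _ => c₁) * (E.w s(u, u') * E.w s(v, v')) := by
    unfold ExpGraph.weight
    rw [← hA_def, ← hB_def, Finset.sum_mul, Finset.sum_mul]
    exact main
  rw [hvc0, hV.1 c₁, zero_mul, one_mul] at hfinal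
  have hw_uu' : E.w s(u, u') ≠ 0 := E.w_ne _ (E.G.mem_edgeSet.mpr hadj1)
  have hw_vv' : E.w s(v, v') ≠ 0 := E.w_ne _ (E.G.mem_edgeSet.mpr hadj3)
  exact mul_ne_zero hw_uu' hw_vv' hfinal.symm
end
end

section
/- In a valid experiment graph G, let u be a vertex incident to an edge e = {u,v} with d(u,c(e)) = 1 and d(v,c(e)) ≥ 2, and let G' be obtained from G by deleting every edge e' ≠ e incident on v with c(e',v) = c(e). Then every vertex colouring feasible in G' has the same weight in G' as in G, and consequently G' is a valid experiment graph with μ(G') = μ(G). -/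
/-!
A perfect matching `m` of `G` that is lost in `G'` matches `v` along a deleted edge, so it
induces a colouring `vc` with `vc v = c(e)`; since `d(u, c(e)) = 1` and `m u ≠ v`, also
`vc u ≠ c(e)`. In `G'` the only edge at `v` of colour `c(e)` is `e`, so every perfect matching
of `G'` inducing `vc` would match `u` with `v` and give `vc u = c(e)`. Hence the lost matchings
only contribute to colourings infeasible in `G'`, which include no monochromatic one.
-/

open scoped Classical

noncomputable section

/-- The graph obtained from `E` by deleting every edge `e' ≠ {u,v}` incident on
`v` whose colour at `v` equals `c(e) = col u v`. -/
noncomputable def ExpGraph.pruneAt {V : Type} [Fintype V] [DecidableEq V] {μ : ℕ}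
    (E : ExpGraph V μ) (u v : V) : ExpGraph V μ where
  G :=
    { Adj := fun a b => E.G.Adj a b ∧
        ¬(a = v ∧ E.col v b = E.col u v ∧ b ≠ u) ∧
        ¬(b = v ∧ E.col v a = E.col u v ∧ a ≠ u)
      symm := by
        constructor
        rintro a b ⟨hab, h1, h2⟩
        exact ⟨hab.symm, h2, h1⟩
      loopless := ⟨fun a h => E.G.loopless.irrefl a h.1⟩ }
  w := E.w
  w_ne := by
    intro e he
    induction e using Sym2.ind with
    | _ a b =>
      exact E.w_ne _ ((SimpleGraph.mem_edgeSet E.G).mpr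
        ((SimpleGraph.mem_edgeSet _).mp he).1)
  col := E.col

namespace ExpGraph

variable {V : Type} [Fintype V] [DecidableEq V] {μ : ℕ} {E : ExpGraph V μ} {u v : V}
  {m : V → V} {vc : V → Fin μ}

theorem eq_of_colDeg_eq_one {x y z : V} {i : Fin μ} (hx : E.colDeg x i = 1)
    (hy : E.G.Adj x y) (hyi : E.col x y = i) (hz : E.G.Adj x z) (hzi : E.col x z = i) :
    y = z :=
  Finset.card_le_one.mp hx.le y (by simp [hy, hyi]) z (by simp [hz, hzi])

theorem exists_of_weight_ne_zero (h : E.weight vc ≠ 0) : ∃ m, E.IsPM m ∧ E.Induces m vc := by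
  obtain ⟨m, hm, -⟩ := Finset.exists_ne_zero_of_sum_ne_zero h
  exact ⟨m, (Finset.mem_filter.mp hm).2⟩

theorem IsPM.of_pruneAt (hm : (E.pruneAt u v).IsPM m) : E.IsPM m :=
  fun x => ⟨(hm x).1.1, (hm x).2⟩

theorem weight_pruneAt_eq (h : ∀ m, E.IsPM m → E.Induces m vc → (E.pruneAt u v).IsPM m) :
    (E.pruneAt u v).weight vc = E.weight vc :=
  Finset.sum_congr (Finset.filter_congr fun m _ =>
    ⟨fun hm => ⟨hm.1.of_pruneAt, hm.2⟩, fun hm => ⟨h m hm.1 hm.2, hm.2⟩⟩) fun _ _ => rfl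

theorem IsPM.apply_eq_of_pruneAt (hm : (E.pruneAt u v).IsPM m)
    (hc : E.col v (m v) = E.col u v) : m v = u := by
  by_contra hne
  exact (hm v).1.2.1 ⟨rfl, hc, hne⟩

theorem IsPM.col_apply_of_not_isPM_pruneAt (hm : E.IsPM m) (hm' : ¬(E.pruneAt u v).IsPM m) :
    E.col v (m v) = E.col u v ∧ m v ≠ u := by
  obtain ⟨x, hx⟩ : ∃ x, ¬(E.pruneAt u v).G.Adj x (m x) := by
    by_contra! h
    exact hm' fun x => ⟨h x, (hm x).2⟩
  have hdeleted : (x = v ∧ E.col v (m x) = E.col u v ∧ m x ≠ u) ∨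
      (m x = v ∧ E.col v x = E.col u v ∧ x ≠ u) := by
    by_contra h
    exact hx ⟨(hm x).1, fun h' => h (.inl h'), fun h' => h (.inr h')⟩
  rcases hdeleted with ⟨rfl, hc, hne⟩ | ⟨hxv, hc, hne⟩
  · exact ⟨hc, hne⟩
  · have hmv : m v = x := by rw [← hxv, (hm x).2]
    exact hmv ▸ ⟨hc, hne⟩

variable (huv : E.G.Adj u v) (hdu : E.colDeg u (E.col u v) = 1)
include huv hdu

theorem IsPM.col_ne_of_not_isPM_pruneAt (hm : E.IsPM m) (hm' : ¬(E.pruneAt u v).IsPM m) :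
    E.col v (m v) = E.col u v ∧ E.col u (m u) ≠ E.col u v := by
  obtain ⟨hc, hne⟩ := hm.col_apply_of_not_isPM_pruneAt hm'
  refine ⟨hc, fun hcu => hne ?_⟩
  rw [← eq_of_colDeg_eq_one hdu (hm u).1 hcu huv rfl, (hm u).2]

theorem isPM_pruneAt_of_induces_const {i : Fin μ} (hm : E.IsPM m)
    (hind : E.Induces m fun _ => i) : (E.pruneAt u v).IsPM m := by
  by_contra hm'
  obtain ⟨hc, hne⟩ := hm.col_ne_of_not_isPM_pruneAt huv hdu hm'
  exact hne (by rw [hind u, ← hind v, hc])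

theorem isPM_pruneAt_of_feasible {m' : V → V} (hm' : (E.pruneAt u v).IsPM m')
    (hind' : E.Induces m' vc) (hm : E.IsPM m) (hind : E.Induces m vc) :
    (E.pruneAt u v).IsPM m := by
  by_contra hlost
  obtain ⟨hc, hne⟩ := hm.col_ne_of_not_isPM_pruneAt huv hdu hlost
  have hm'v : m' v = u := hm'.apply_eq_of_pruneAt (by rw [hind' v, ← hind v, hc])
  have hm'u : m' u = v := by rw [← hm'v, (hm' v).2]
  exact hne (by rw [hind u, ← hind' u, hm'u])

end ExpGraph

theorem prune_at_valid_general
    {V : Type} [Fintype V] [DecidableEq V] {μ : ℕ}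
    (E : ExpGraph V μ) (hV : E.Valid) (u v : V) (huv : E.G.Adj u v)
    (hdu : E.colDeg u (E.col u v) = 1) :
    (∀ vc : V → Fin μ,
        (∃ m, (E.pruneAt u v).IsPM m ∧ (E.pruneAt u v).Induces m vc) →
        (E.pruneAt u v).weight vc = E.weight vc) ∧
      (E.pruneAt u v).Valid := by
  have hweight : ∀ vc : V → Fin μ,
      (∃ m, (E.pruneAt u v).IsPM m ∧ (E.pruneAt u v).Induces m vc) →
      (E.pruneAt u v).weight vc = E.weight vc := fun _ ⟨_, hm', hind'⟩ =>
    ExpGraph.weight_pruneAt_eq fun _ hm hind =>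
      ExpGraph.isPM_pruneAt_of_feasible huv hdu hm' hind' hm hind
  refine ⟨hweight, fun i => ?_, fun vc hvc => ?_⟩
  · obtain ⟨m, hm, hind⟩ :=
      ExpGraph.exists_of_weight_ne_zero (E := E) (by rw [hV.1 i]; exact one_ne_zero)
    rw [hweight _ ⟨m, ExpGraph.isPM_pruneAt_of_induces_const huv hdu hm hind, hind⟩, hV.1 i]
  · by_contra hne
    exact hne (by rw [hweight vc (ExpGraph.exists_of_weight_ne_zero hne), hV.2 vc hvc])

/-- in a valid experiment graph, if `e = {u,v}` satisfies
`d(u, c(e)) = 1` and `d(v, c(e)) ≥ 2`, and `G'` is obtained by deleting every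
edge `e' ≠ e` incident on `v` with `c(e',v) = c(e)`, then every vertex colouring
feasible in `G'` has the same weight in `G'` as in `G`, and `G'` is a valid
experiment graph (of the same dimension `μ`). -/
theorem prune_at_valid
    {V : Type} [Fintype V] [DecidableEq V] {μ : ℕ}
    (E : ExpGraph V μ) (hV : E.Valid) (u v : V) (huv : E.G.Adj u v)
    (hdu : E.colDeg u (E.col u v) = 1) (hdv : 2 ≤ E.colDeg v (E.col u v)) :
    (∀ vc : V → Fin μ,
        (∃ m, (E.pruneAt u v).IsPM m ∧ (E.pruneAt u v).Induces m vc) →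
        (E.pruneAt u v).weight vc = E.weight vc) ∧
      (E.pruneAt u v).Valid :=
  prune_at_valid_general E hV u v huv hdu
end
end
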